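/- Let J_s be the standard skew-symmetric (2s)×(2s) block matrix [[0, I_s], [-I_s, 0]]. For n, s ≥ 1, the image of the map α ↦ α J_s αᵀ from the complex n×(2s) matrices to the complex n×n matrices is exactly the set of skew-symmetric complex n×n matrices of rank at most 2s. This realizes the complex affine categorical quotient Hom(ℂ²ˢ, ℂⁿ) // Sp(s,ℂ) as the variety of skew matrices of rank ≤ 2s, the image in p⁺ of the closure of the s-th holomorphic nilpotent orbit of so*(2n). -/

import Mathlib

/-!
Writing `α = [A | B]` gives `α J αᵀ = A Bᵀ - B Aᵀ`, which is skew of rank `≤ 2s`. Conversely a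
skew `X` of rank `≤ 2s` is a sum of `s` wedges `u ∧ v = u vᵀ - v uᵀ`: if `X i j = c ≠ 0`, the
wedge `P = c⁻¹ e_j ∧ e_i` satisfies `P X P = P`, so by Wedderburn's rank reduction
`X - X P X` is skew of rank `≤ rank X - 2`, while `X P X = X e_i ∧ c⁻¹ X e_j` is a wedge.
Induction on `s` finishes the proof.
-/

open Matrix

namespace Matrix

variable {K R m n : Type*} [Field K] [CommRing R]

theorem rank_sub_mul_mul_add_rank_le [Fintype m] [Fintype n] (X : Matrix m n K)
    (P : Matrix n m K) (hP : P * X * P = P) : (X - X * P * X).rank + P.rank ≤ X.rank := by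
  -- `X * P` is idempotent and kills `X - X * P * X`, so the two ranges are disjoint in `range X`.
  have hidem : X * P * (X * P) = X * P := by
    rw [← Matrix.mul_assoc, Matrix.mul_assoc X P X, Matrix.mul_assoc, hP]
  have hannih : X * P * (X - X * P * X) = 0 := by
    rw [Matrix.mul_sub, ← Matrix.mul_assoc (X * P) (X * P), hidem, sub_self]
  have hdisj : Disjoint (LinearMap.range (X - X * P * X).mulVecLin)
      (LinearMap.range (X * P).mulVecLin) := by
    rw [Submodule.disjoint_def]
    rintro _ ⟨a, rfl⟩ ⟨b, hb⟩
    simp only [mulVecLin_apply] at hb ⊢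
    rw [← hb, ← hidem, ← mulVec_mulVec, hb, mulVec_mulVec, hannih, zero_mulVec]
  have hrangeY : LinearMap.range (X - X * P * X).mulVecLin ≤ LinearMap.range X.mulVecLin := by
    rintro _ ⟨a, rfl⟩
    exact ⟨a - P *ᵥ X *ᵥ a, by simp [mulVec_sub, mulVec_mulVec, Matrix.mul_assoc]⟩
  have hrangeXP : LinearMap.range (X * P).mulVecLin ≤ LinearMap.range X.mulVecLin := by
    simpa only [mulVecLin_mul] using LinearMap.range_comp_le_range _ _
  have hrankP : P.rank ≤ (X * P).rank := by
    simpa only [← Matrix.mul_assoc, hP] using rank_mul_le_right P (X * P)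
  calc (X - X * P * X).rank + P.rank ≤ (X - X * P * X).rank + (X * P).rank := by omega
    _ = Module.finrank K ↥(LinearMap.range (X - X * P * X).mulVecLin ⊔
          LinearMap.range (X * P).mulVecLin) := by
      rw [rank, rank, ← Submodule.finrank_sup_add_finrank_inf_eq, hdisj.eq_bot, finrank_bot,
        add_zero]
    _ ≤ X.rank := Submodule.finrank_mono (sup_le hrangeY hrangeXP)

theorem eq_zero_of_rank_eq_zero [Fintype n] {X : Matrix m n K} (h : X.rank = 0) : X = 0 := by
  classical
  rwa [rank, Submodule.finrank_eq_zero, LinearMap.range_eq_bot, ← toLin'_apply',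
    LinearEquiv.map_eq_zero_iff] at h

theorem dotProduct_mulVec_eq_neg_of_transpose_eq_neg [Fintype n] {X : Matrix n n R}
    (hX : Xᵀ = -X) (v w : n → R) : v ⬝ᵥ X *ᵥ w = -(w ⬝ᵥ X *ᵥ v) := by
  rw [dotProduct_mulVec, ← mulVec_transpose, hX, neg_mulVec, neg_dotProduct, dotProduct_comm]

theorem dotProduct_mulVec_self_of_transpose_eq_neg [Fintype n] [NoZeroDivisors R]
    [NeZero (2 : R)] {X : Matrix n n R} (hX : Xᵀ = -X) (v : n → R) : v ⬝ᵥ X *ᵥ v = 0 := by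
  have h := dotProduct_mulVec_eq_neg_of_transpose_eq_neg hX v v
  have h2 : (2 : R) * (v ⬝ᵥ X *ᵥ v) = 0 := by linear_combination h
  exact (mul_eq_zero.mp h2).resolve_left two_ne_zero

theorem vecMulVec_mul_mul_vecMulVec [Fintype n] (a b c d : n → R) (X : Matrix n n R) :
    vecMulVec a b * X * vecMulVec c d = (b ⬝ᵥ X *ᵥ c) • vecMulVec a d := by
  rw [vecMulVec_mul, vecMulVec_mul_vecMulVec, ← dotProduct_mulVec, vecMulVec_smul]

def wedge (u v : n → R) : Matrix n n R := vecMulVec u v - vecMulVec v u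

theorem transpose_wedge (u v : n → R) : (wedge u v)ᵀ = -wedge u v := by
  simp [wedge, transpose_vecMulVec]

theorem wedge_mul_mul_wedge [Fintype n] [NoZeroDivisors R] [NeZero (2 : R)] {X : Matrix n n R}
    (hX : Xᵀ = -X) (g h : n → R) : wedge g h * X * wedge g h = (h ⬝ᵥ X *ᵥ g) • wedge g h := by
  simp only [wedge, Matrix.sub_mul, Matrix.mul_sub, vecMulVec_mul_mul_vecMulVec,
    dotProduct_mulVec_self_of_transpose_eq_neg hX,
    dotProduct_mulVec_eq_neg_of_transpose_eq_neg hX g h]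
  module

theorem mul_wedge_mul [Fintype n] {X : Matrix n n R} (hX : Xᵀ = -X) (g h : n → R) :
    X * wedge g h * X = wedge (X *ᵥ h) (X *ᵥ g) := by
  have hvecMul : ∀ v, v ᵥ* X = -(X *ᵥ v) := fun v => by
    rw [← mulVec_transpose, hX, neg_mulVec]
  simp only [wedge, Matrix.mul_sub, Matrix.sub_mul, mul_vecMulVec, vecMulVec_mul, hvecMul,
    vecMulVec_neg]
  abel

theorem snoc_mul_transpose_sub_snoc_mul_transpose {s : ℕ} (A B : Matrix n (Fin s) R)
    (u v : n → R) :
    (of fun k => Fin.snoc (A k) (u k)) * (of fun k => Fin.snoc (B k) (v k))ᵀ -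
        (of fun k => Fin.snoc (B k) (v k)) * (of fun k => Fin.snoc (A k) (u k))ᵀ =
      A * Bᵀ - B * Aᵀ + wedge u v := by
  ext a b
  simp only [sub_apply, add_apply, mul_apply, transpose_apply, of_apply, Fin.sum_univ_castSucc,
    Fin.snoc_castSucc, Fin.snoc_last, wedge, vecMulVec_apply]
  ring

theorem exists_rank_sub_wedge_add_two_le [Fintype n] [DecidableEq n] [NeZero (2 : K)]
    {X : Matrix n n K} (hX : Xᵀ = -X) (hX0 : X ≠ 0) :
    ∃ u v : n → K, (X - wedge u v).rank + 2 ≤ X.rank := by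
  obtain ⟨i, j, hij⟩ : ∃ i j, X i j ≠ 0 := by
    by_contra! h
    exact hX0 (Matrix.ext h)
  have hne : i ≠ j := by
    rintro rfl
    exact hij (by simpa using dotProduct_mulVec_self_of_transpose_eq_neg hX (Pi.single i 1))
  set g : n → K := Pi.single j (X i j)⁻¹
  set h : n → K := Pi.single i 1
  have hPXP : wedge g h * X * wedge g h = wedge g h := by
    rw [wedge_mul_mul_wedge hX]
    simp [g, h, mulVec_single, hij]
  -- the `{i, j}` minor of `wedge g h` is `!![0, -(X i j)⁻¹; (X i j)⁻¹, 0]`, which is invertible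
  have hP : 2 ≤ (wedge g h).rank := by
    have hsub := rank_submatrix_le (wedge g h) ![i, j] ![i, j]
    rw [rank_of_det_ne_zero] at hsub
    · simpa using hsub
    · rw [det_fin_two]
      simp [wedge, vecMulVec_apply, g, h, hne, hne.symm, hij]
  refine ⟨X *ᵥ h, X *ᵥ g, ?_⟩
  rw [← mul_wedge_mul hX]
  have := rank_sub_mul_mul_add_rank_le X (wedge g h) hPXP
  omega

theorem exists_eq_mul_transpose_sub_of_rank_le [Fintype n] [DecidableEq n] [NeZero (2 : K)]
    {s : ℕ} {X : Matrix n n K} (hX : Xᵀ = -X) (hr : X.rank ≤ 2 * s) :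
    ∃ A B : Matrix n (Fin s) K, X = A * Bᵀ - B * Aᵀ := by
  induction s generalizing X with
  | zero => exact ⟨0, 0, by simp [eq_zero_of_rank_eq_zero (Nat.le_zero.mp hr)]⟩
  | succ s ih =>
    by_cases hX0 : X = 0
    · exact ⟨0, 0, by simp [hX0]⟩
    obtain ⟨u, v, huv⟩ := exists_rank_sub_wedge_add_two_le hX hX0
    have hskew : (X - wedge u v)ᵀ = -(X - wedge u v) := by
      rw [transpose_sub, hX, transpose_wedge, neg_sub, neg_sub_neg]
    obtain ⟨A, B, hAB⟩ := ih hskew (by omega)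
    refine ⟨of fun k => Fin.snoc (A k) (u k), of fun k => Fin.snoc (B k) (v k), ?_⟩
    rw [snoc_mul_transpose_sub_snoc_mul_transpose, ← hAB, sub_add_cancel]

theorem fromCols_mul_fromBlocks_mul_transpose {s : Type*} [Fintype s] [DecidableEq s]
    (A B : Matrix n s R) :
    fromCols A B * (fromBlocks 0 1 (-1) 0 : Matrix (s ⊕ s) (s ⊕ s) R) * (fromCols A B)ᵀ =
      A * Bᵀ - B * Aᵀ := by
  rw [fromCols_mul_fromBlocks, transpose_fromCols, fromCols_mul_fromRows]
  simp only [Matrix.mul_zero, Matrix.mul_one, Matrix.mul_neg, Matrix.neg_mul, zero_add, add_zero]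
  abel

end Matrix

theorem range_hilbert_map_symplectic_general (n s : ℕ)
    (J : Matrix (Fin s ⊕ Fin s) (Fin s ⊕ Fin s) ℂ)
    (hJ : J = Matrix.fromBlocks 0 1 (-1) 0) :
    Set.range (fun α : Matrix (Fin n) (Fin s ⊕ Fin s) ℂ => α * J * αᵀ) =
      {X : Matrix (Fin n) (Fin n) ℂ | Xᵀ = -X ∧ X.rank ≤ 2 * s} := by
  subst hJ
  ext X
  constructor
  · rintro ⟨α, rfl⟩
    refine ⟨?_, ?_⟩
    · dsimp only
      rw [← fromCols_toCols α, fromCols_mul_fromBlocks_mul_transpose]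
      simp [transpose_sub]
    · calc _ ≤ αᵀ.rank := rank_mul_le_right _ _
        _ ≤ Fintype.card (Fin s ⊕ Fin s) := rank_le_card_height _
        _ = 2 * s := by simp [two_mul]
  · rintro ⟨hskew, hrank⟩
    obtain ⟨A, B, rfl⟩ := exists_eq_mul_transpose_sub_of_rank_le hskew hrank
    exact ⟨fromCols A B, fromCols_mul_fromBlocks_mul_transpose A B⟩

/-- Let `J_s = [[0, I_s], [-I_s, 0]]` be the standard skew-symmetric
`(2s)×(2s)` matrix. For `n, s ≥ 1`, the image of the Hilbert map
`α ↦ α J_s αᵀ` on complex `n×(2s)` matrices is exactly the set of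
skew-symmetric complex `n×n` matrices of rank at most `2s`. This realizes the
complex affine categorical quotient `Hom(ℂ²ˢ, ℂⁿ) // Sp(s,ℂ)` as the variety
of skew matrices of rank `≤ 2s`, the image in `p⁺` of the closure of the
`s`-th holomorphic nilpotent orbit of `so*(2n)`. -/
theorem range_hilbert_map_symplectic (n s : ℕ) (hn : 1 ≤ n) (hs : 1 ≤ s)
    (J : Matrix (Fin s ⊕ Fin s) (Fin s ⊕ Fin s) ℂ)
    (hJ : J = Matrix.fromBlocks 0 1 (-1) 0) :
    Set.range (fun α : Matrix (Fin n) (Fin s ⊕ Fin s) ℂ => α * J * αᵀ) =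
      {X : Matrix (Fin n) (Fin n) ℂ | Xᵀ = -X ∧ X.rank ≤ 2 * s} :=
  range_hilbert_map_symplectic_general n s J hJ
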